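/- Let g be a symmetric positive definite n×n real matrix with inverse g^{-1}, p a covector in ℝ^n, α, β positive reals, and v a real number. Define G_{ij} = (1/β) g_{ij} + (v/(αβ)) p_i p_j and set τ = (1/2) pᵀ g^{-1} p. Then G is positive definite if and only if α + 2τ v > 0. -/

import Mathlib

open Matrix

section aux

variable {n : ℕ}

private lemma quadform_pos {g : Matrix (Fin n) (Fin n) ℝ} (hg : g.PosDef)
    {x : Fin n → ℝ} (hx : x ≠ 0) : 0 < x ⬝ᵥ g *ᵥ x := by
  simpa using hg.dotProduct_mulVec_pos hx

private lemma sym_swap {g : Matrix (Fin n) (Fin n) ℝ} (hg : g.IsHermitian)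
    (u x : Fin n → ℝ) : u ⬝ᵥ g *ᵥ x = x ⬝ᵥ g *ᵥ u := by
  simp only [dotProduct, mulVec, Finset.mul_sum]
  rw [Finset.sum_comm]
  refine Finset.sum_congr rfl fun i _ => Finset.sum_congr rfl fun j _ => ?_
  have h : g j i = g i j := by
    have := congrFun (congrFun hg j) i
    simpa [conjTranspose_apply] using this.symm
  rw [h]; ring

private lemma cs {g : Matrix (Fin n) (Fin n) ℝ} (hg : g.PosDef) (u x : Fin n → ℝ) :
    (u ⬝ᵥ g *ᵥ x)^2 ≤ (u ⬝ᵥ g *ᵥ u) * (x ⬝ᵥ g *ᵥ x) := by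
  have hd : discrim (x ⬝ᵥ g *ᵥ x) (2 * (u ⬝ᵥ g *ᵥ x)) (u ⬝ᵥ g *ᵥ u) ≤ 0 := by
    apply discrim_le_zero
    intro t
    have h0 : (0:ℝ) ≤ (t • x + u) ⬝ᵥ g *ᵥ (t • x + u) := by
      rcases eq_or_ne (t • x + u) 0 with h | h
      · simp [h]
      · exact (quadform_pos hg h).le
    have hexp : (t • x + u) ⬝ᵥ g *ᵥ (t • x + u)
        = (x ⬝ᵥ g *ᵥ x) * (t * t) + 2 * (u ⬝ᵥ g *ᵥ x) * t + u ⬝ᵥ g *ᵥ u := by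
      simp only [mulVec_add, mulVec_smul, dotProduct_add, add_dotProduct,
        smul_dotProduct, dotProduct_smul, smul_eq_mul]
      rw [sym_swap hg.isHermitian x u]
      ring
    linarith [hexp ▸ h0]
  rw [discrim] at hd
  nlinarith [hd]

end aux

/-- `G = (1/β)g + (v/(αβ)) p pᵀ` is positive definite iff `α + 2τv > 0`,
where `τ = (1/2) pᵀ g⁻¹ p`. -/
theorem stmt0 {n : ℕ} (g : Matrix (Fin n) (Fin n) ℝ) (hg : g.PosDef)
    (p : Fin n → ℝ) (α β : ℝ) (hα : 0 < α) (hβ : 0 < β) (v : ℝ)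
    (τ : ℝ) (hτ : τ = (1/2) * (p ⬝ᵥ g⁻¹ *ᵥ p))
    (G : Matrix (Fin n) (Fin n) ℝ)
    (hG : G = (1/β) • g + (v/(α*β)) • vecMulVec p p) :
    G.PosDef ↔ 0 < α + 2*τ*v := by
  have hginv : g⁻¹.PosDef := hg.inv
  have hvmv : ∀ x : Fin n → ℝ, vecMulVec p p *ᵥ x = (p ⬝ᵥ x) • p := by
    intro x; ext i
    simp only [mulVec, dotProduct, vecMulVec_apply, Pi.smul_apply, smul_eq_mul,
      Finset.sum_mul]
    rw [← Finset.sum_mul, Finset.sum_mul]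
    exact Finset.sum_congr rfl fun j _ => by ring
  have hQ : ∀ x : Fin n → ℝ, x ⬝ᵥ G *ᵥ x
      = (1/β) * (x ⬝ᵥ g *ᵥ x) + (v/(α*β)) * (p ⬝ᵥ x)^2 := by
    intro x
    rw [hG]
    rw [add_mulVec, smul_mulVec, smul_mulVec, dotProduct_add,
      dotProduct_smul, dotProduct_smul, hvmv, dotProduct_smul]
    rw [dotProduct_comm x p]
    simp only [smul_eq_mul]; ring
  -- facts about u = g⁻¹ *ᵥ p
  set u : Fin n → ℝ := g⁻¹ *ᵥ p with hu
  have hgu : g *ᵥ u = p := by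
    rw [hu, mulVec_mulVec, Matrix.mul_nonsing_inv _ hg.det_pos.ne'.isUnit, one_mulVec]
  have h2τ : p ⬝ᵥ u = 2 * τ := by rw [hτ, hu]; ring
  have hquu : u ⬝ᵥ g *ᵥ u = 2 * τ := by
    rw [hgu, dotProduct_comm, h2τ]
  constructor
  · intro hGpd
    by_cases hp : p = 0
    · have : τ = 0 := by simp [hτ, hp]
      rw [this]; simpa using hα
    · have hτpos : 0 < τ := by
        have := quadform_pos hginv hp
        rw [hτ]; linarith
      have hu0 : u ≠ 0 := fun h => hp (by rw [← hgu, h, mulVec_zero])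
      have key : 0 < (1/β) * (2*τ) + (v/(α*β)) * (2*τ)^2 := by
        have := hGpd.dotProduct_mulVec_pos hu0
        simp only [star_trivial] at this
        rw [hQ u, h2τ] at this
        -- x ⬝ᵥ g *ᵥ x with x = u
        rw [hquu] at this
        exact this
      have h' : 0 < ((1/β) * (2*τ) + (v/(α*β)) * (2*τ)^2) * (α*β) :=
        mul_pos key (mul_pos hα hβ)
      have e : ((1/β) * (2*τ) + (v/(α*β)) * (2*τ)^2) * (α*β)
          = 2*τ*(α + 2*τ*v) := by field_simp
      rw [e] at h'
      nlinarith [hτpos]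
  · intro h
    have hGH : G.IsHermitian := by
      rw [hG]
      show _ = _
      ext i j
      have hsym : g j i = g i j := by
        have := congrFun (congrFun hg.isHermitian j) i
        simpa [conjTranspose_apply] using this.symm
      simp [conjTranspose_apply, vecMulVec_apply, hsym, mul_comm]
    refine Matrix.PosDef.of_dotProduct_mulVec_pos hGH fun x hx => ?_
    simp only [star_trivial]
    rw [hQ x]
    have hA : 0 < x ⬝ᵥ g *ᵥ x := quadform_pos hg hx
    rcases le_or_gt 0 v with hv | hv
    · have h1 : 0 ≤ (v/(α*β)) * (p ⬝ᵥ x)^2 :=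
        mul_nonneg (div_nonneg hv (mul_pos hα hβ).le) (sq_nonneg _)
      have h2 : 0 < (1/β) * (x ⬝ᵥ g *ᵥ x) := by positivity
      linarith
    · -- Cauchy–Schwarz
      have hpx : p ⬝ᵥ x = u ⬝ᵥ g *ᵥ x := by
        rw [← hgu, dotProduct_comm]
        exact sym_swap hg.isHermitian x u
      have hcs : (p ⬝ᵥ x)^2 ≤ 2*τ * (x ⬝ᵥ g *ᵥ x) := by
        rw [hpx, ← hquu]
        exact cs hg u x
      have hc : v/(α*β) ≤ 0 := div_nonpos_of_nonpos_of_nonneg hv.le (mul_pos hα hβ).le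
      have h1 : (v/(α*β)) * (2*τ * (x ⬝ᵥ g *ᵥ x)) ≤ (v/(α*β)) * (p ⬝ᵥ x)^2 :=
        mul_le_mul_of_nonpos_left hcs hc
      have e : (1/β) * (x ⬝ᵥ g *ᵥ x) + (v/(α*β)) * (2*τ * (x ⬝ᵥ g *ᵥ x))
          = (x ⬝ᵥ g *ᵥ x) * (α + 2*τ*v) / (α*β) := by field_simp
      have h2 : 0 < (x ⬝ᵥ g *ᵥ x) * (α + 2*τ*v) / (α*β) :=
        div_pos (mul_pos hA h) (mul_pos hα hβ)
      linarith [e ▸ h2]
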